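/- arXiv:2503.16232 — 2 statements merged into one kernel-verified Lean document; each statement's English description precedes it below -/
import Mathlib

section
/- Consider the system of ODEs a(0)=1, a' = -(ε/(n-1))·a/(κ²a+ε) - κ²a²/(κ²a+ε) and b(0)=1, b' = -(ε/(n-1))·b/(κ²a+ε), with constants ε > 0, κ > 0, and n ≥ 2. Then the maximal solution (a,b) is defined on all of [0,∞), and both a and b are positive and monotonically decreasing. -/
/-!
In the variable `u = log a` the `a`-equation is autonomous, `u' = F u` with
`F x = -(α + κ² eˣ) / (κ² eˣ + ε)` and `α = ε / (n - 1)`; since `n ≥ 2` we have `α ≤ ε`, hence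
`-1 ≤ F < 0`. The time map `K x = ∫_0^x -1/F` therefore has derivative at least `1`, so it is an
increasing bijection of `ℝ`, and `u s = K⁻¹ (-s)` is a global decreasing solution.
The `b`-equation has the first integral `b (α + κ² a) / a`, which gives
`b = (α + κ²) a / (α + κ² a)`, positive and decreasing since `a` is.
-/

open Set Filter Real

theorem surjective_of_forall_hasDerivAt_ge {K k : ℝ → ℝ} {c : ℝ} (hc : 0 < c)
    (hK : ∀ x, HasDerivAt K (k x) x) (hk : ∀ x, c ≤ k x) : Function.Surjective K := by
  have hdiff : Differentiable ℝ K := fun x => (hK x).differentiableAt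
  have hslope : ∀ ⦃x y⦄, x ≤ y → c * (y - x) ≤ K y - K x :=
    mul_sub_le_image_sub_of_le_deriv hdiff fun x => (hK x).deriv ▸ hk x
  intro p
  set r := |p - K 0| / c
  have hr : 0 ≤ r := by positivity
  have hcr : c * r = |p - K 0| := mul_div_cancel₀ _ hc.ne'
  refine mem_range_of_exists_le_of_exists_ge hdiff.continuous ⟨-r, ?_⟩ ⟨r, ?_⟩
  · have := hslope (neg_nonpos.2 hr)
    linarith [neg_abs_le (p - K 0)]
  · have := hslope hr
    linarith [le_abs_self (p - K 0)]

theorem OrderIso.hasDerivAt_symm (e : ℝ ≃o ℝ) {y f' : ℝ} (he : HasDerivAt e f' (e.symm y))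
    (hf' : f' ≠ 0) : HasDerivAt e.symm f'⁻¹ y :=
  he.of_local_left_inverse e.symm.continuous.continuousAt hf'
    (Eventually.of_forall e.apply_symm_apply)

theorem exists_antitone_forall_hasDerivAt_of_neg_of_le {F : ℝ → ℝ} {C : ℝ} (hF : Continuous F)
    (hF_neg : ∀ x, F x < 0) (hF_ge : ∀ x, -C ≤ F x) (u₀ : ℝ) :
    ∃ u : ℝ → ℝ, u 0 = u₀ ∧ Antitone u ∧ ∀ s, HasDerivAt u (F (u s)) s := by
  have hC : 0 < C := by linarith [hF_neg 0, hF_ge 0]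
  set k : ℝ → ℝ := fun x => (-F x)⁻¹
  have hk_ge : ∀ x, C⁻¹ ≤ k x := fun x =>
    inv_anti₀ (neg_pos.2 (hF_neg x)) (by linarith [hF_ge x])
  set K : ℝ → ℝ := fun x => ∫ t in u₀..x, k t
  have hK : ∀ x, HasDerivAt K (k x) x := fun x =>
    ((hF.neg.inv₀ fun x => (neg_pos.2 (hF_neg x)).ne').integral_hasStrictDerivAt u₀ x).hasDerivAt
  have hK_mono : StrictMono K :=
    strictMono_of_hasDerivAt_pos hK fun x => (inv_pos.2 hC).trans_le (hk_ge x)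
  set e := hK_mono.orderIsoOfSurjective K
    (surjective_of_forall_hasDerivAt_ge (inv_pos.2 hC) hK hk_ge)
  refine ⟨fun s => e.symm (-s), ?_, e.symm.monotone.comp_antitone fun _ _ h => neg_le_neg h,
    fun s => ?_⟩
  · show e.symm (-0) = u₀
    rw [neg_zero, e.symm_apply_eq]
    simp [e, K]
  · have hk_ne : k (e.symm (-s)) ≠ 0 := ((inv_pos.2 hC).trans_le (hk_ge _)).ne'
    exact ((e.hasDerivAt_symm (hK _) hk_ne).comp s (hasDerivAt_neg s)).congr_deriv (by simp [k])

noncomputable def logVectorField (α ε κ x : ℝ) : ℝ :=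
  -(α + κ ^ 2 * exp x) / (κ ^ 2 * exp x + ε)

section

variable {α ε κ : ℝ}

theorem continuous_logVectorField (hε : 0 < ε) : Continuous (logVectorField α ε κ) := by
  unfold logVectorField
  exact Continuous.div (by fun_prop) (by fun_prop) fun x => by positivity

theorem logVectorField_neg (hα : 0 < α) (hε : 0 < ε) (x : ℝ) : logVectorField α ε κ x < 0 :=
  div_neg_of_neg_of_pos (by nlinarith [exp_pos x, sq_nonneg κ]) (by positivity)

theorem neg_one_le_logVectorField (hε : 0 < ε) (hαε : α ≤ ε) (x : ℝ) :
    -1 ≤ logVectorField α ε κ x := by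
  rw [logVectorField, neg_div, neg_le_neg_iff]
  exact div_le_one_of_le₀ (by linarith) (by positivity)

theorem HasDerivAt.exp_of_logVectorField {u : ℝ → ℝ} {s : ℝ}
    (hu : HasDerivAt u (logVectorField α ε κ (u s)) s) :
    HasDerivAt (fun t => Real.exp (u t))
      (-α * (Real.exp (u s) / (κ ^ 2 * Real.exp (u s) + ε))
        - κ ^ 2 * Real.exp (u s) ^ 2 / (κ ^ 2 * Real.exp (u s) + ε)) s :=
  hu.exp.congr_deriv (by rw [logVectorField]; ring)

theorem monotoneOn_div_add_mul {c : ℝ} (hα : 0 < α) (hc : 0 ≤ c) :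
    MonotoneOn (fun x => x / (α + c * x)) (Ioi 0) := by
  intro x (hx : 0 < x) y (hy : 0 < y) hxy
  dsimp only
  rw [div_le_div_iff₀ (by positivity) (by positivity)]
  nlinarith

theorem HasDerivAt.const_mul_div_add_mul {a : ℝ → ℝ} {s : ℝ} (hα : 0 < α) (hε : 0 < ε)
    (ha_pos : 0 < a s)
    (ha : HasDerivAt a
      (-α * (a s / (κ ^ 2 * a s + ε)) - κ ^ 2 * a s ^ 2 / (κ ^ 2 * a s + ε)) s) (c : ℝ) :
    HasDerivAt (fun t => c * (a t / (α + κ ^ 2 * a t)))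
      (-α * (c * (a s / (α + κ ^ 2 * a s)) / (κ ^ 2 * a s + ε))) s := by
  have hden : 0 < α + κ ^ 2 * a s := by positivity
  have hden' : 0 < κ ^ 2 * a s + ε := by positivity
  refine ((ha.div ((ha.const_mul _).const_add α) hden.ne').const_mul c).congr_deriv ?_
  field_simp
  ring

end

theorem ode_global_solution_general (ε κ : ℝ) (hε : 0 < ε) (n : ℕ)
    (hn : 2 ≤ n) :
    ∃ a b : ℝ → ℝ,
      a 0 = 1 ∧ b 0 = 1 ∧
      (∀ s ∈ Set.Ici (0 : ℝ),
        HasDerivAt a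
          (-(ε / ((n : ℝ) - 1)) * (a s / (κ ^ 2 * a s + ε))
            - κ ^ 2 * (a s) ^ 2 / (κ ^ 2 * a s + ε)) s ∧
        HasDerivAt b (-(ε / ((n : ℝ) - 1)) * (b s / (κ ^ 2 * a s + ε))) s) ∧
      (∀ s ∈ Set.Ici (0 : ℝ), 0 < a s ∧ 0 < b s) ∧
      AntitoneOn a (Set.Ici 0) ∧ AntitoneOn b (Set.Ici 0) := by
  have hm : (1 : ℝ) ≤ (n : ℝ) - 1 := by
    have : (2 : ℝ) ≤ n := by exact_mod_cast hn
    linarith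
  set α := ε / ((n : ℝ) - 1)
  have hα : 0 < α := div_pos hε (by linarith)
  obtain ⟨u, hu0, hu_anti, hu⟩ := exists_antitone_forall_hasDerivAt_of_neg_of_le
    (continuous_logVectorField hε) (logVectorField_neg (κ := κ) hα hε)
    (neg_one_le_logVectorField hε (div_le_self hε.le hm)) 0
  set a := fun s => exp (u s)
  have ha_pos : ∀ s, 0 < a s := fun s => exp_pos _
  have ha_anti : Antitone a := exp_monotone.comp_antitone hu_anti
  have ha : ∀ s, HasDerivAt a _ s := fun s => (hu s).exp_of_logVectorField
  set b := fun s => (α + κ ^ 2) * (a s / (α + κ ^ 2 * a s))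
  have hb_anti : Antitone b := fun x y hxy => mul_le_mul_of_nonneg_left
    (monotoneOn_div_add_mul hα (sq_nonneg κ) (ha_pos y) (ha_pos x) (ha_anti hxy)) (by positivity)
  have hb0 : b 0 = 1 := by
    simp only [b, a, hu0, exp_zero, mul_one]
    exact mul_one_div_cancel (by positivity)
  refine ⟨a, b, by simp [a, hu0], hb0,
    fun s _ => ⟨ha s, (ha s).const_mul_div_add_mul hα hε (ha_pos s) _⟩,
    fun s _ => ⟨ha_pos s, by have := ha_pos s; positivity⟩,
    ha_anti.antitoneOn _, hb_anti.antitoneOn _⟩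

/-- The ODE system `a(0)=1`, `a' = -(ε/(n-1))·a/(κ²a+ε) - κ²a²/(κ²a+ε)`,
`b(0)=1`, `b' = -(ε/(n-1))·b/(κ²a+ε)` with `ε > 0`, `κ > 0`, `n ≥ 2`
has a (maximal) solution defined on all of `[0,∞)`, and both components are
positive and monotonically decreasing. -/
theorem ode_global_solution (ε κ : ℝ) (hε : 0 < ε) (hκ : 0 < κ) (n : ℕ)
    (hn : 2 ≤ n) :
    ∃ a b : ℝ → ℝ,
      a 0 = 1 ∧ b 0 = 1 ∧
      (∀ s ∈ Set.Ici (0 : ℝ),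
        HasDerivAt a
          (-(ε / ((n : ℝ) - 1)) * (a s / (κ ^ 2 * a s + ε))
            - κ ^ 2 * (a s) ^ 2 / (κ ^ 2 * a s + ε)) s ∧
        HasDerivAt b (-(ε / ((n : ℝ) - 1)) * (b s / (κ ^ 2 * a s + ε))) s) ∧
      (∀ s ∈ Set.Ici (0 : ℝ), 0 < a s ∧ 0 < b s) ∧
      AntitoneOn a (Set.Ici 0) ∧ AntitoneOn b (Set.Ici 0) :=
  ode_global_solution_general ε κ hε n hn
end

section
/- Let f: M → ℝ be a smooth function on a compact manifold M with boundary, with f ≤ 1, f^{-1}({1}) = ∂M, and only finitely many critical points, all in the interior. Let Ψ^t be the negative gradient flow of f with respect to some Riemannian metric. Then for every open neighborhood U of the union of the unstable manifolds of all critical points, there exists t₀ ≥ 0 with Ψ^t(M) ⊂ U for all t ≥ t₀; equivalently, ⋂_{t≥0} Ψ^t(M) equals the union of all unstable manifolds. -/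
/-- The unstable set of a rest point `p` of the semiflow `Ψ`:  points `x`
through which there is a complete (ancient) orbit `γ` with `γ(0) = x` and
`lim_{t→-∞} γ(t) = p`. -/
def unstableSet {M : Type*} [TopologicalSpace M] (Ψ : ℝ → M → M) (p : M) :
    Set M :=
  {x : M | ∃ γ : ℝ → M, γ 0 = x ∧
    (∀ t s : ℝ, 0 ≤ s → γ (t + s) = Ψ s (γ t)) ∧
    Filter.Tendsto γ Filter.atBot (nhds p)}

/-!
Every point of `⋂_{t ≥ 0} Ψ^t(M)` has a preimage under each `Ψ^n`; a cluster point, in the compact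
space `M^ℝ`, of the backward orbits of these preimages is a full orbit through the point. Along a
full orbit `f` is nonincreasing and bounded, so it has the same value at all α-limit points; as the
α-limit set is invariant, it consists of rest points. Since these are finitely many and the
backward half-orbit is connected, the α-limit set is a single rest point `p`, the limit of the orbit
at `-∞`. The uniform absorption statement holds because the ranges `Ψ^t(M)` form a decreasing
family of compact sets.
-/

open Set Filter Topology

theorem MapClusterPt.eq_of_tendsto {X α : Type*} [TopologicalSpace X] [T2Space X]
    {F : Filter α} {u : α → X} {a b : X} (ha : MapClusterPt a F u) (hb : Tendsto u F (𝓝 b)) :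
    a = b := by
  by_contra hab
  exact (ha.clusterPt.mono hb).ne (disjoint_nhds_nhds.2 hab).eq_bot

theorem Continuous.exists_tendsto_atBot_of_mapClusterPt_mem {X : Type*} [TopologicalSpace X]
    [CompactSpace X] [T2Space X] {γ : ℝ → X} (hγ : Continuous γ) {S : Set X} (hS : S.Finite)
    (h : ∀ a, MapClusterPt a atBot γ → a ∈ S) : ∃ p ∈ S, Tendsto γ atBot (𝓝 p) := by
  obtain ⟨p, hp⟩ : ∃ p, MapClusterPt p atBot γ := exists_clusterPt_of_compactSpace _
  obtain ⟨V, W, hV, hW, hpV, hSW, hVW⟩ := SeparatedNhds.of_isCompact_isCompact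
    isCompact_singleton (hS.subset (sdiff_subset (t := {p}))).isCompact
    (disjoint_singleton_left.2 fun hp => hp.2 rfl)
  have hpV : p ∈ V := hpV rfl
  have hVW_ev : ∀ᶠ t in atBot, γ t ∈ V ∪ W := by
    refine isCompact_univ.tendsto_nhdsSet_of_mapClusterPt (.of_forall fun _ => mem_univ _)
      (s' := V ∪ W) (fun a _ ha => ?_) ((hV.union hW).mem_nhdsSet.2 subset_rfl)
    by_cases hap : a = p
    · exact .inl (hap ▸ hpV)
    · exact .inr (hSW ⟨h a ha, hap⟩)
  obtain ⟨T, hT⟩ := mem_atBot_sets.1 hVW_ev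
  -- The connected tail `γ '' Iic T` meets `V` because `p` is a cluster point, so it stays in `V`.
  have htail : γ '' Iic T ⊆ V := by
    obtain ⟨t, htV, htT⟩ := ((hp.frequently (hV.mem_nhds hpV)).and_eventually
      (eventually_le_atBot T)).exists
    exact (isPreconnected_Iic.image γ hγ.continuousOn).subset_left_of_subset_union hV hW hVW
      (image_subset_iff.2 hT) ⟨γ t, mem_image_of_mem γ htT, htV⟩
  refine ⟨p, h p hp, tendsto_nhds_of_unique_mapClusterPt fun q hq => ?_⟩
  by_contra hqp
  obtain ⟨t, htW, htT⟩ := ((hq.frequently (hW.mem_nhds (hSW ⟨h q hq, hqp⟩))).and_eventually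
    (eventually_le_atBot T)).exists
  exact disjoint_left.1 hVW (htail (mem_image_of_mem γ htT)) htW

section Semiflow

variable {M : Type*} {Ψ : ℝ → M → M}

def IsFullOrbit (Ψ : ℝ → M → M) (γ : ℝ → M) : Prop :=
  ∀ t s : ℝ, 0 ≤ s → γ (t + s) = Ψ s (γ t)

theorem range_subset_range_of_le
    (hsemi : ∀ s t : ℝ, 0 ≤ s → 0 ≤ t → ∀ x, Ψ (s + t) x = Ψ s (Ψ t x)) {a b : ℝ} (ha : 0 ≤ a)
    (hab : a ≤ b) : range (Ψ b) ⊆ range (Ψ a) := by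
  rintro _ ⟨x, rfl⟩
  exact ⟨Ψ (b - a) x, by rw [← hsemi a (b - a) ha (sub_nonneg.2 hab), add_sub_cancel]⟩

namespace IsFullOrbit

variable {γ : ℝ → M}

theorem apply_mem_range (hγ : IsFullOrbit Ψ γ) (t : ℝ) {s : ℝ} (hs : 0 ≤ s) :
    γ t ∈ range (Ψ s) :=
  ⟨γ (t - s), by rw [← hγ _ _ hs, sub_add_cancel]⟩

variable {f : M → ℝ} {C : Set M}

theorem antitone_comp (hγ : IsFullOrbit Ψ γ) (hfix : ∀ p ∈ C, ∀ t : ℝ, 0 ≤ t → Ψ t p = p)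
    (hdec : ∀ x : M, x ∉ C → ∀ t : ℝ, 0 < t → f (Ψ t x) < f x) : Antitone (f ∘ γ) := by
  intro t u htu
  obtain rfl | htu := htu.eq_or_lt
  · exact le_rfl
  have hγu : γ u = Ψ (u - t) (γ t) := by rw [← hγ _ _ (sub_nonneg.2 htu.le), add_sub_cancel]
  simp only [Function.comp_apply, hγu]
  by_cases hC : γ t ∈ C
  · rw [hfix _ hC _ (sub_nonneg.2 htu.le)]
  · exact (hdec _ hC _ (sub_pos.2 htu)).le

end IsFullOrbit

variable [TopologicalSpace M]

theorem exists_range_subset_of_biInter_range_subset [CompactSpace M] [T2Space M]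
    (hΨ : ∀ s, Continuous (Ψ s))
    (hsemi : ∀ s t : ℝ, 0 ≤ s → 0 ≤ t → ∀ x, Ψ (s + t) x = Ψ s (Ψ t x)) {U : Set M}
    (hU : IsOpen U) (h : (⋂ t ∈ Ici (0 : ℝ), range (Ψ t)) ⊆ U) :
    ∃ t₀ : ℝ, 0 ≤ t₀ ∧ ∀ t : ℝ, t₀ ≤ t → range (Ψ t) ⊆ U := by
  have hdir : Directed (· ⊇ ·) fun t : Ici (0 : ℝ) => range (Ψ t) := fun a b =>
    ⟨⟨max a b, mem_Ici.2 (le_max_of_le_left a.2)⟩,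
      range_subset_range_of_le hsemi a.2 (le_max_left _ _),
      range_subset_range_of_le hsemi b.2 (le_max_right _ _)⟩
  obtain ⟨⟨t₀, ht₀⟩, hsub⟩ := exists_subset_nhds_of_isCompact hdir
    (fun t => isCompact_range (hΨ t)) fun x hx =>
      hU.mem_nhds (h (by simpa [iInter_subtype] using hx))
  exact ⟨t₀, ht₀, fun t ht => (range_subset_range_of_le hsemi ht₀ ht).trans hsub⟩

theorem exists_isFullOrbit_of_forall_mem_range [CompactSpace M] [T2Space M]
    (hΨ : ∀ s, Continuous (Ψ s))
    (hsemi : ∀ s t : ℝ, 0 ≤ s → 0 ≤ t → ∀ x, Ψ (s + t) x = Ψ s (Ψ t x)) {x : M}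
    (hx : ∀ n : ℕ, x ∈ range (Ψ n)) : ∃ γ : ℝ → M, γ 0 = x ∧ IsFullOrbit Ψ γ := by
  choose y hy using hx
  -- `orbit n t = Ψ^{n + t} (y n)`, meaningful only for `t ≥ -n`.
  set orbit : ℕ → ℝ → M := fun n t => Ψ (n + t) (y n)
  obtain ⟨γ, hγ⟩ := exists_clusterPt_of_compactSpace (map orbit atTop)
  have hnonneg : ∀ t : ℝ, ∀ᶠ n : ℕ in atTop, 0 ≤ (n : ℝ) + t := fun t =>
    (tendsto_natCast_atTop_atTop.eventually_ge_atTop (-t)).mono fun n hn => by linarith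
  refine ⟨γ, ?_, fun t s hs => ?_⟩
  · refine (isClosed_eq (continuous_apply 0) continuous_const).mem_of_mapClusterPt
      (s := {g : ℝ → M | g 0 = x}) hγ (.of_forall fun n => ?_)
    simp [orbit, hy n]
  · refine (isClosed_eq (continuous_apply _)
      ((hΨ s).comp (continuous_apply t))).mem_of_mapClusterPt hγ ?_
    filter_upwards [hnonneg t] with n hn
    change Ψ (n + (t + s)) (y n) = Ψ s (Ψ (n + t) (y n))
    rw [← hsemi s _ hs hn, add_comm s, add_assoc]

namespace IsFullOrbit

variable {γ : ℝ → M} {f : M → ℝ} {C : Set M}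

theorem continuous (hcont : Continuous fun q : ℝ × M => Ψ q.1 q.2) (hγ : IsFullOrbit Ψ γ) :
    Continuous γ := by
  refine continuous_iff_continuousAt.2 fun t => ?_
  have hflow : Continuous fun u => Ψ (u - (t - 1)) (γ (t - 1)) := by fun_prop
  refine hflow.continuousAt.congr ?_
  filter_upwards [Ioi_mem_nhds (sub_one_lt t)] with u hu
  rw [← hγ _ _ (sub_nonneg.2 (le_of_lt hu)), add_sub_cancel]

theorem mapClusterPt_atBot_apply (hγ : IsFullOrbit Ψ γ) {s : ℝ} (hs : 0 ≤ s)
    (hΨs : Continuous (Ψ s)) {a : M} (ha : MapClusterPt a atBot γ) :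
    MapClusterPt (Ψ s a) atBot γ := by
  have hshift : Ψ s ∘ γ = γ ∘ (· + s) := funext fun t => (hγ t s hs).symm
  have := ha.continuousAt_comp hΨs.continuousAt
  rw [hshift] at this
  exact this.of_comp (tendsto_atBot_add_const_right _ s tendsto_id)

-- `f` takes the value `lim_{t → -∞} f (γ t)` both at `a` and at `Ψ 1 a`, so `a` is a rest point.
theorem mapClusterPt_atBot_mem (hγ : IsFullOrbit Ψ γ) (hΨ : Continuous (Ψ 1))
    (hf : Continuous f) (hbdd : BddAbove (range f))
    (hfix : ∀ p ∈ C, ∀ t : ℝ, 0 ≤ t → Ψ t p = p)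
    (hdec : ∀ x : M, x ∉ C → ∀ t : ℝ, 0 < t → f (Ψ t x) < f x) {a : M}
    (ha : MapClusterPt a atBot γ) : a ∈ C := by
  have hlim : Tendsto (f ∘ γ) atBot (𝓝 (⨆ t, f (γ t))) :=
    tendsto_atBot_ciSup (hγ.antitone_comp hfix hdec) (hbdd.mono (range_comp_subset_range γ f))
  have hfa := (ha.continuousAt_comp hf.continuousAt).eq_of_tendsto hlim
  have hfΨa := ((hγ.mapClusterPt_atBot_apply zero_le_one hΨ ha).continuousAt_comp
    hf.continuousAt).eq_of_tendsto hlim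
  by_contra haC
  exact (hdec a haC 1 one_pos).ne (hfΨa.trans hfa.symm)

theorem exists_tendsto_atBot [CompactSpace M] [T2Space M] (hγ : IsFullOrbit Ψ γ)
    (hcont : Continuous fun q : ℝ × M => Ψ q.1 q.2) (hf : Continuous f) (hC : C.Finite)
    (hfix : ∀ p ∈ C, ∀ t : ℝ, 0 ≤ t → Ψ t p = p)
    (hdec : ∀ x : M, x ∉ C → ∀ t : ℝ, 0 < t → f (Ψ t x) < f x) :
    ∃ p ∈ C, Tendsto γ atBot (𝓝 p) :=
  (hγ.continuous hcont).exists_tendsto_atBot_of_mapClusterPt_mem hC fun _ =>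
    hγ.mapClusterPt_atBot_mem (by fun_prop) hf (isCompact_range hf).bddAbove hfix hdec

end IsFullOrbit

end Semiflow

theorem gradient_flow_converges_to_unstable_general
    {M : Type*} [TopologicalSpace M] [CompactSpace M] [T2Space M]
    (Ψ : ℝ → M → M)
    (hcont : Continuous fun q : ℝ × M => Ψ q.1 q.2)
    (hsemi : ∀ s t : ℝ, 0 ≤ s → 0 ≤ t → ∀ x, Ψ (s + t) x = Ψ s (Ψ t x))
    (f : M → ℝ) (hf : Continuous f)
    (C : Finset M)
    (hfix : ∀ p ∈ C, ∀ t : ℝ, 0 ≤ t → Ψ t p = p)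
    (hdec : ∀ x : M, x ∉ (C : Set M) → ∀ t : ℝ, 0 < t → f (Ψ t x) < f x) :
    (∀ U : Set M, IsOpen U → (⋃ p ∈ C, unstableSet Ψ p) ⊆ U →
      ∃ t₀ : ℝ, 0 ≤ t₀ ∧ ∀ t : ℝ, t₀ ≤ t → Set.range (Ψ t) ⊆ U) ∧
    (⋂ t ∈ Set.Ici (0 : ℝ), Set.range (Ψ t)) = ⋃ p ∈ C, unstableSet Ψ p := by
  have hΨ : ∀ s, Continuous (Ψ s) := fun s => hcont.comp (Continuous.prodMk_right s)
  have hrange : (⋂ t ∈ Ici (0 : ℝ), range (Ψ t)) = ⋃ p ∈ C, unstableSet Ψ p := by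
    refine Subset.antisymm (fun x hx => ?_) ?_
    · obtain ⟨γ, rfl, hγ⟩ := exists_isFullOrbit_of_forall_mem_range hΨ hsemi fun n =>
        mem_iInter₂.1 hx n (mem_Ici.2 n.cast_nonneg)
      obtain ⟨p, hp, hlim⟩ := hγ.exists_tendsto_atBot hcont hf C.finite_toSet hfix hdec
      exact mem_biUnion hp ⟨γ, rfl, hγ, hlim⟩
    · refine iUnion₂_subset fun p _ => ?_
      rintro _ ⟨γ, rfl, hγ : IsFullOrbit Ψ γ, -⟩
      exact mem_iInter₂.2 fun t ht => hγ.apply_mem_range 0 ht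
  exact ⟨fun U hU hsub => exists_range_subset_of_biInter_range_subset hΨ hsemi hU
    (hrange.trans_subset hsub), hrange⟩

/-- **Convergence of the negative gradient flow to the unstable manifolds.**
Let `f : M → ℝ` be a smooth (Morse) function on a compact manifold with
boundary, with `f ≤ 1`, `f⁻¹(1) = ∂M` and finitely many critical points `C`,
all interior, and let `Ψ^t` be the negative gradient semiflow of `f` (so `f`
strictly decreases along nonconstant flow lines and the rest points of `Ψ` are
exactly the critical points of `f`).  Then for every open neighborhood `U` of
the union of the unstable manifolds of the critical points there is a `t₀ ≥ 0`
with `Ψ^t(M) ⊆ U` for all `t ≥ t₀`; equivalently,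
`⋂_{t ≥ 0} Ψ^t(M)` equals the union of all unstable manifolds. -/
theorem gradient_flow_converges_to_unstable
    {M : Type*} [TopologicalSpace M] [CompactSpace M] [T2Space M]
    (Ψ : ℝ → M → M)
    (hcont : Continuous fun q : ℝ × M => Ψ q.1 q.2)
    (hΨ0 : ∀ x, Ψ 0 x = x)
    (hsemi : ∀ s t : ℝ, 0 ≤ s → 0 ≤ t → ∀ x, Ψ (s + t) x = Ψ s (Ψ t x))
    (f : M → ℝ) (hf : Continuous f) (hf1 : ∀ x, f x ≤ 1)
    (C : Finset M)
    (hfix : ∀ p ∈ C, ∀ t : ℝ, 0 ≤ t → Ψ t p = p)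
    (hdec : ∀ x : M, x ∉ (C : Set M) → ∀ t : ℝ, 0 < t → f (Ψ t x) < f x) :
    (∀ U : Set M, IsOpen U → (⋃ p ∈ C, unstableSet Ψ p) ⊆ U →
      ∃ t₀ : ℝ, 0 ≤ t₀ ∧ ∀ t : ℝ, t₀ ≤ t → Set.range (Ψ t) ⊆ U) ∧
    (⋂ t ∈ Set.Ici (0 : ℝ), Set.range (Ψ t)) = ⋃ p ∈ C, unstableSet Ψ p :=
  gradient_flow_converges_to_unstable_general Ψ hcont hsemi f hf C hfix hdec
end
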